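/- arXiv:1203.0709 — 2 statements merged into one kernel-verified Lean document; each statement's English description precedes it below -/
import Mathlib

section
/- Let k ≥ 2, v = t·d with t ≥ k and d ≥ k−1, and let M be an incidence matrix of a symmetric configuration v_k which, viewed as a t×t array of d×d blocks, has every block equal to either a d×d permutation matrix or the d×d zero matrix (Structure E). Then M contains t·⌊d/(k−1)⌋ pairwise disjoint E-aggregates; in particular it contains at least t ≥ k pairwise disjoint E-aggregates. -/
/-- An incidence matrix of a symmetric configuration with parameter `k`: a square
0,1-matrix (values in `Bool`) with all row and column sums equal to `k` that is
`J₂`-free. -/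
def IsIncidenceMatrix {ι : Type*} [Fintype ι] [DecidableEq ι] (k : ℕ)
    (M : Matrix ι ι Bool) : Prop :=
  (∀ i, (Finset.univ.filter (fun j => M i j = true)).card = k) ∧
  (∀ j, (Finset.univ.filter (fun i => M i j = true)).card = k) ∧
  ∀ i i' j j', i ≠ i' → j ≠ j' →
    ¬(M i j = true ∧ M i j' = true ∧ M i' j = true ∧ M i' j' = true)

/-- An E-aggregate of `M`: a set `R` of `k-1` rows corresponding to pairwise disjoint
lines, a set `C` of `k-1` columns corresponding to pairwise non-collinear points,
such that the `(k-1) × (k-1)` submatrix on `R × C` is a permutation matrix. -/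
def IsEAggregate {ι : Type*} [Fintype ι] [DecidableEq ι] (k : ℕ)
    (M : Matrix ι ι Bool) (R C : Finset ι) : Prop :=
  R.card = k - 1 ∧ C.card = k - 1 ∧
  (∀ j : ι, ∀ i ∈ R, ∀ i' ∈ R, i ≠ i' → ¬(M i j = true ∧ M i' j = true)) ∧
  (∀ i : ι, ∀ j ∈ C, ∀ j' ∈ C, j ≠ j' → ¬(M i j = true ∧ M i j' = true)) ∧
  (∀ i ∈ R, ∃! j : ι, j ∈ C ∧ M i j = true) ∧
  (∀ j ∈ C, ∃! i : ι, i ∈ R ∧ M i j = true)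

/-- If an incidence matrix of a symmetric configuration `v_k` with `v = t·d`,
`t ≥ k`, `d ≥ k-1`, has Structure E (viewed as a `t × t` array of `d × d` blocks,
each block is a permutation matrix or the zero matrix), then it admits
`t·⌊d/(k-1)⌋` pairwise disjoint E-aggregates. -/
theorem structureE_extensions (t d k : ℕ) (hk : 2 ≤ k) (ht : k ≤ t)
    (hd : k - 1 ≤ d)
    (M : Matrix (Fin t × Fin d) (Fin t × Fin d) Bool)
    (hM : IsIncidenceMatrix k M)
    (hE : ∀ l m : Fin t,
      (∃ e : Equiv.Perm (Fin d), ∀ i j : Fin d, (M (l, i) (m, j) = true ↔ j = e i)) ∨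
      (∀ i j : Fin d, M (l, i) (m, j) = false)) :
    ∃ F : Fin (t * (d / (k - 1))) →
        Finset (Fin t × Fin d) × Finset (Fin t × Fin d),
      (∀ a, IsEAggregate k M (F a).1 (F a).2) ∧
      (∀ a b, a ≠ b → Disjoint (F a).1 (F b).1 ∧ Disjoint (F a).2 (F b).2) := by
  classical
  obtain ⟨hrow, hcol, hJ2⟩ := hM
  have hk1 : 1 ≤ k - 1 := by omega
  have hd1 : 0 < d := by omega
  set k' := k - 1 with hk'def
  set q := d / k' with hqdef
  -- If a block has a true entry, it is a permutation block.
  have hNz : ∀ l m : Fin t, (∃ i j, M (l,i) (m,j) = true) →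
      ∃ e : Equiv.Perm (Fin d), ∀ i j, (M (l,i) (m,j) = true ↔ j = e i) := by
    rintro l m ⟨i, j, hij⟩
    rcases hE l m with h | h
    · exact h
    · rw [h i j] at hij; exact absurd hij (by simp)
  set N : Fin t → Finset (Fin t) :=
    fun l => Finset.univ.filter (fun m => ∃ i j, M (l,i) (m,j) = true) with hN
  -- Each block row has exactly k nonzero blocks.
  have hNcard : ∀ l, (N l).card = k := by
    intro l
    have hA := hrow (l, ⟨0, hd1⟩)
    have himg : N l =
        (Finset.univ.filter (fun p : Fin t × Fin d => M (l, ⟨0, hd1⟩) p = true)).image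
          Prod.fst := by
      ext m
      simp only [hN, Finset.mem_filter, Finset.mem_image, Finset.mem_univ, true_and]
      constructor
      · rintro ⟨i, j, hij⟩
        obtain ⟨e, he⟩ := hNz l m ⟨i, j, hij⟩
        exact ⟨(m, e ⟨0, hd1⟩), (he _ _).mpr rfl, rfl⟩
      · rintro ⟨⟨m', j⟩, hp, rfl⟩
        exact ⟨_, _, hp⟩
    rw [himg, Finset.card_image_of_injOn, hA]
    rintro ⟨m1, j1⟩ h1 ⟨m2, j2⟩ h2 (h : m1 = m2)
    subst h
    simp only [Finset.coe_filter, Set.mem_setOf_eq, Finset.mem_univ, true_and] at h1 h2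
    obtain ⟨e, he⟩ := hNz l m1 ⟨_, _, h1⟩
    have e1 := (he _ _).mp h1
    have e2 := (he _ _).mp h2
    exact Prod.ext rfl (e1.trans e2.symm)
  -- Each block column has exactly k nonzero blocks.
  have hN'card : ∀ m : Fin t,
      (Finset.univ.filter (fun l => ∃ i j, M (l,i) (m,j) = true)).card = k := by
    intro m
    have hA := hcol (m, ⟨0, hd1⟩)
    have himg : Finset.univ.filter (fun l => ∃ i j, M (l,i) (m,j) = true) =
        (Finset.univ.filter (fun p : Fin t × Fin d => M p (m, ⟨0, hd1⟩) = true)).image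
          Prod.fst := by
      ext l
      simp only [Finset.mem_filter, Finset.mem_image, Finset.mem_univ, true_and]
      constructor
      · rintro ⟨i, j, hij⟩
        obtain ⟨e, he⟩ := hNz l m ⟨i, j, hij⟩
        exact ⟨(l, e.symm ⟨0, hd1⟩), (he _ _).mpr (by simp), rfl⟩
      · rintro ⟨⟨l', i⟩, hp, rfl⟩
        exact ⟨_, _, hp⟩
    rw [himg, Finset.card_image_of_injOn, hA]
    rintro ⟨l1, i1⟩ h1 ⟨l2, i2⟩ h2 (h : l1 = l2)
    subst h
    simp only [Finset.coe_filter, Set.mem_setOf_eq, Finset.mem_univ, true_and] at h1 h2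
    obtain ⟨e, he⟩ := hNz l1 m ⟨_, _, h1⟩
    have e1 := (he _ _).mp h1
    have e2 := (he _ _).mp h2
    exact Prod.ext rfl (e.injective (e1.symm.trans e2))
  -- Hall's condition and Hall's theorem.
  have hall : ∀ S : Finset (Fin t), S.card ≤ (S.biUnion N).card := by
    intro S
    set B := S.biUnion N with hB
    set P := (S ×ˢ B).filter (fun p => p.2 ∈ N p.1) with hP
    have hsub : ∀ l ∈ S, N l ⊆ B := fun l hl => Finset.subset_biUnion_of_mem N hl
    have h1 : P.card = k * S.card := by
      rw [Finset.card_eq_sum_card_fiberwise (f := Prod.fst) (t := S)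
        (by rintro ⟨l, m⟩ hp
            exact (Finset.mem_product.mp (Finset.mem_filter.mp hp).1).1)]
      have hfib : ∀ l ∈ S, (P.filter (fun p => p.1 = l)).card = k := by
        intro l hl
        have : P.filter (fun p => p.1 = l) = (N l).image (fun m => (l, m)) := by
          ext ⟨l', m⟩
          simp only [hP, Finset.mem_filter, Finset.mem_product, Finset.mem_image]
          constructor
          · rintro ⟨⟨⟨hlS, hmB⟩, hmN⟩, rfl⟩
            exact ⟨m, hmN, rfl⟩
          · rintro ⟨m', hm', h⟩
            obtain ⟨rfl, rfl⟩ := Prod.mk.injEq .. ▸ h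
            exact ⟨⟨⟨hl, hsub l hl hm'⟩, hm'⟩, rfl⟩
        rw [this, Finset.card_image_of_injective _ (fun a b h => (Prod.mk.injEq .. ▸ h).2),
          hNcard l]
      rw [Finset.sum_congr rfl hfib, Finset.sum_const, smul_eq_mul, mul_comm]
    have h2 : P.card ≤ k * B.card := by
      rw [Finset.card_eq_sum_card_fiberwise (f := Prod.snd) (t := B)
        (by rintro ⟨l, m⟩ hp
            exact (Finset.mem_product.mp (Finset.mem_filter.mp hp).1).2)]
      calc ∑ m ∈ B, (P.filter (fun p => p.2 = m)).card
          ≤ ∑ m ∈ B, k := by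
            apply Finset.sum_le_sum
            intro m _
            have : P.filter (fun p => p.2 = m) =
                (S.filter (fun l => m ∈ N l)).image (fun l => (l, m)) := by
              ext ⟨l, m'⟩
              simp only [hP, Finset.mem_filter, Finset.mem_product, Finset.mem_image]
              constructor
              · rintro ⟨⟨⟨hlS, hmB⟩, hmN⟩, rfl⟩
                exact ⟨l, ⟨hlS, hmN⟩, rfl⟩
              · rintro ⟨l', ⟨hl', hm'⟩, h⟩
                obtain ⟨rfl, rfl⟩ := Prod.mk.injEq .. ▸ h
                exact ⟨⟨⟨hl', hsub _ hl' hm'⟩, hm'⟩, rfl⟩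
            rw [this,
              Finset.card_image_of_injective _ (fun a b h => (Prod.mk.injEq .. ▸ h).1)]
            calc (S.filter (fun l => m ∈ N l)).card
                ≤ (Finset.univ.filter (fun l => ∃ i j, M (l,i) (m,j) = true)).card := by
                  apply Finset.card_le_card
                  intro l hl
                  simp only [Finset.mem_filter, hN, Finset.mem_univ, true_and] at hl ⊢
                  exact hl.2
              _ = k := hN'card m
          _ = k * B.card := by rw [Finset.sum_const, smul_eq_mul, mul_comm]
    have := h1 ▸ h2
    exact Nat.le_of_mul_le_mul_left this (by omega)
  obtain ⟨f, hfinj, hf⟩ := (Finset.all_card_le_biUnion_card_iff_exists_injective N).mp hall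
  -- the permutation of the chosen block in each block row
  have hfe : ∀ l, ∃ e : Equiv.Perm (Fin d), ∀ i j, (M (l,i) (f l, j) = true ↔ j = e i) := by
    intro l
    apply hNz
    have := hf l
    simpa only [hN, Finset.mem_filter, Finset.mem_univ, true_and] using this
  choose e he using hfe
  -- index arithmetic
  have hidx : ∀ (g : Fin q) (s : Fin k'), (g : ℕ) * k' + s < d := by
    intro g s
    have h1 : (g : ℕ) + 1 ≤ q := g.2
    have h2 : ((g : ℕ) + 1) * k' ≤ q * k' := Nat.mul_le_mul_right _ h1
    have h3 : q * k' ≤ d := Nat.div_mul_le_self d k'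
    have h4 : ((g : ℕ) + 1) * k' = (g : ℕ) * k' + k' := by ring
    have hs := s.2
    omega
  set idx : Fin q → Fin k' → Fin d := fun g s => ⟨(g : ℕ) * k' + s, hidx g s⟩ with hidxdef
  have idx_inj : ∀ g s g' s', idx g s = idx g' s' → g = g' ∧ s = s' := by
    intro g s g' s' h
    have hv : (g : ℕ) * k' + s = (g' : ℕ) * k' + s' := congrArg Fin.val h
    have hs := s.2; have hs' := s'.2
    have key : ∀ (a : ℕ) (b : Fin k'), (a * k' + (b : ℕ)) / k' = a ∧
        (a * k' + (b : ℕ)) % k' = (b : ℕ) := by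
      intro a b
      constructor
      · rw [Nat.mul_comm, Nat.mul_add_div (by omega), Nat.div_eq_of_lt b.2, Nat.add_zero]
      · rw [Nat.mul_comm, Nat.mul_add_mod, Nat.mod_eq_of_lt b.2]
    obtain ⟨d1, m1⟩ := key g s
    obtain ⟨d2, m2⟩ := key g' s'
    refine ⟨Fin.ext ?_, Fin.ext ?_⟩
    · rw [← d1, ← d2, hv]
    · rw [← m1, ← m2, hv]
  set R : Fin t → Fin q → Finset (Fin t × Fin d) :=
    fun l g => Finset.univ.image (fun s : Fin k' => ((l, idx g s) : Fin t × Fin d)) with hR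
  set C : Fin t → Fin q → Finset (Fin t × Fin d) :=
    fun l g => Finset.univ.image
      (fun s : Fin k' => ((f l, e l (idx g s)) : Fin t × Fin d)) with hC
  have hRmem : ∀ l g x, x ∈ R l g ↔ ∃ s : Fin k', x = (l, idx g s) := by
    intro l g x
    simp only [hR, Finset.mem_image, Finset.mem_univ, true_and]
    exact ⟨fun ⟨s, h⟩ => ⟨s, h.symm⟩, fun ⟨s, h⟩ => ⟨s, h.symm⟩⟩
  have hCmem : ∀ l g x, x ∈ C l g ↔ ∃ s : Fin k', x = (f l, e l (idx g s)) := by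
    intro l g x
    simp only [hC, Finset.mem_image, Finset.mem_univ, true_and]
    exact ⟨fun ⟨s, h⟩ => ⟨s, h.symm⟩, fun ⟨s, h⟩ => ⟨s, h.symm⟩⟩
  have hRcard : ∀ l g, (R l g).card = k' := by
    intro l g
    rw [hR]
    rw [Finset.card_image_of_injective _ ?_, Finset.card_univ, Fintype.card_fin]
    intro s s' h
    exact (idx_inj g s g s' (congrArg Prod.snd h)).2
  have hCcard : ∀ l g, (C l g).card = k' := by
    intro l g
    rw [hC]
    rw [Finset.card_image_of_injective _ ?_, Finset.card_univ, Fintype.card_fin]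
    intro s s' h
    exact (idx_inj g s g s' ((e l).injective (congrArg Prod.snd h))).2
  have hAgg : ∀ l g, IsEAggregate k M (R l g) (C l g) := by
    intro l g
    refine ⟨hRcard l g, hCcard l g, ?_, ?_, ?_, ?_⟩
    · rintro ⟨m', j'⟩ i hi i' hi' hne ⟨h1, h2⟩
      obtain ⟨s, rfl⟩ := (hRmem l g i).mp hi
      obtain ⟨s', rfl⟩ := (hRmem l g i').mp hi'
      rcases hE l m' with ⟨e', he'⟩ | hz
      · have ha := (he' _ _).mp h1
        have hb := (he' _ _).mp h2
        apply hne
        have : idx g s = idx g s' := e'.injective (ha ▸ hb ▸ rfl)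
        rw [this]
      · rw [hz] at h1; exact absurd h1 (by simp)
    · rintro ⟨l'', i''⟩ j hj j' hj' hne ⟨h1, h2⟩
      obtain ⟨s, rfl⟩ := (hCmem l g j).mp hj
      obtain ⟨s', rfl⟩ := (hCmem l g j').mp hj'
      rcases hE l'' (f l) with ⟨e', he'⟩ | hz
      · have ha := (he' _ _).mp h1
        have hb := (he' _ _).mp h2
        apply hne
        have : idx g s = idx g s' := (e l).injective (ha.trans hb.symm)
        rw [this]
      · rw [hz] at h1; exact absurd h1 (by simp)
    · intro i hi
      obtain ⟨s, rfl⟩ := (hRmem l g i).mp hi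
      refine ⟨(f l, e l (idx g s)), ⟨(hCmem l g _).mpr ⟨s, rfl⟩, (he l _ _).mpr rfl⟩, ?_⟩
      rintro j'' ⟨hmem, htrue⟩
      obtain ⟨s', rfl⟩ := (hCmem l g j'').mp hmem
      have := (he l _ _).mp htrue
      have : idx g s' = idx g s := (e l).injective this
      rw [(idx_inj _ _ _ _ this).2]
    · intro j hj
      obtain ⟨s, rfl⟩ := (hCmem l g j).mp hj
      refine ⟨(l, idx g s), ⟨(hRmem l g _).mpr ⟨s, rfl⟩, (he l _ _).mpr rfl⟩, ?_⟩
      rintro i'' ⟨hmem, htrue⟩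
      obtain ⟨s', rfl⟩ := (hRmem l g i'').mp hmem
      have h' := (he l _ _).mp htrue
      have : idx g s = idx g s' := (e l).injective h'
      rw [(idx_inj _ _ _ _ this).2]
  refine ⟨fun a => (R (finProdFinEquiv.symm a).1 (finProdFinEquiv.symm a).2,
                    C (finProdFinEquiv.symm a).1 (finProdFinEquiv.symm a).2), ?_, ?_⟩
  · intro a; exact hAgg _ _
  · intro a b hab
    have hpq : finProdFinEquiv.symm a ≠ finProdFinEquiv.symm b :=
      fun h => hab (finProdFinEquiv.symm.injective h)
    constructor
    · rw [Finset.disjoint_left]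
      intro x hx hx'
      obtain ⟨s, rfl⟩ := (hRmem _ _ x).mp hx
      obtain ⟨s', h⟩ := (hRmem _ _ _).mp hx'
      obtain ⟨hl, hi⟩ := Prod.mk.injEq .. ▸ h
      apply hpq
      exact Prod.ext hl ((idx_inj _ _ _ _ hi).1)
    · rw [Finset.disjoint_left]
      intro x hx hx'
      obtain ⟨s, rfl⟩ := (hCmem _ _ x).mp hx
      obtain ⟨s', h⟩ := (hCmem _ _ _).mp hx'
      obtain ⟨hl, hi⟩ := Prod.mk.injEq .. ▸ h
      have hll : (finProdFinEquiv.symm a).1 = (finProdFinEquiv.symm b).1 := hfinj hl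
      apply hpq
      refine Prod.ext hll ?_
      rw [hll] at hi
      exact (idx_inj _ _ _ _ ((e _).injective hi)).1
end

section
/- Let k ≥ 2, v = t·d with t ≥ k and d ≥ k−1, and let M be an incidence matrix of a symmetric configuration v_k which is block double-circulant with t×t array of circulant d×d blocks, such that the weight of each block lies in {0,1}. Then for every integer θ with 0 ≤ θ ≤ t+1 there exists an incidence matrix of a symmetric configuration (v+θ)_k. -/
open Finset

lemma card_filter_sum {α β : Type*} [Fintype α] [Fintype β]
    (P : α ⊕ β → Prop) [DecidablePred P] :
    (univ.filter P).card =
      (univ.filter (fun a => P (Sum.inl a))).card + (univ.filter (fun b => P (Sum.inr b))).card := by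
  classical
  rw [← Finset.univ_disjSum_univ, ← Finset.card_disjSum]
  congr 1
  ext x
  cases x <;> simp

section EXT
variable {ι : Type*} [Fintype ι] [DecidableEq ι] {k : ℕ} {N : Matrix ι ι Bool}

def extMatrix (N : Matrix ι ι Bool) (p L : Fin (k-1) → ι) :
    Matrix (ι ⊕ Unit) (ι ⊕ Unit) Bool := fun x y =>
  match x, y with
  | Sum.inl x, Sum.inl y => N x y && !(decide (∃ a, x = p a ∧ y = L a))
  | Sum.inl x, Sum.inr _ => decide (∃ a, x = p a)
  | Sum.inr _, Sum.inl y => decide (∃ a, y = L a)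
  | Sum.inr _, Sum.inr _ => true

lemma ext_lemma (hN : IsIncidenceMatrix k N) (hk : 1 ≤ k)
    (p L : Fin (k-1) → ι) (hp : Function.Injective p) (hL : Function.Injective L)
    (h1 : ∀ a b, (N (p a) (L b) = true ↔ a = b))
    (h2 : ∀ a b, a ≠ b → ∀ j, ¬(N (p a) j = true ∧ N (p b) j = true))
    (h3 : ∀ a b, a ≠ b → ∀ i, ¬(N i (L a) = true ∧ N i (L b) = true)) :
    IsIncidenceMatrix k (extMatrix N p L) := by
  obtain ⟨hr, hc, hj⟩ := hN
  refine ⟨?_, ?_, ?_⟩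
  · -- row sums
    rintro (x | u)
    · rw [card_filter_sum]
      by_cases hx : ∃ a, x = p a
      · obtain ⟨a, rfl⟩ := hx
        have e1 : (univ.filter fun y => extMatrix N p L (Sum.inl (p a)) (Sum.inl y) = true)
            = (univ.filter fun y => N (p a) y = true).erase (L a) := by
          ext y
          simp only [extMatrix, Bool.and_eq_true, Bool.not_eq_true', decide_eq_false_iff_not,
            mem_filter, mem_erase, mem_univ, true_and]
          constructor
          · rintro ⟨hNy, hno⟩
            exact ⟨fun hy => hno ⟨a, rfl, hy⟩, hNy⟩
          · rintro ⟨hy, hNy⟩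
            refine ⟨hNy, ?_⟩
            rintro ⟨b, hb, rfl⟩
            have : b = a := hp hb.symm
            exact hy (by rw [this])
        rw [e1, Finset.card_erase_of_mem (by simp [(h1 a a).2 rfl]), hr]
        have e2 : (univ.filter fun u' : Unit =>
            extMatrix N p L (Sum.inl (p a)) (Sum.inr u') = true).card = 1 := by
          rw [Finset.card_eq_one]
          exact ⟨(), by (ext u; simp [extMatrix]) <;> exact ⟨a, rfl⟩⟩
        rw [e2]
        omega
      · have e1 : (univ.filter fun y => extMatrix N p L (Sum.inl x) (Sum.inl y) = true)
            = (univ.filter fun y => N x y = true) := by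
          ext y
          simp only [extMatrix, Bool.and_eq_true, Bool.not_eq_true', decide_eq_false_iff_not,
            mem_filter, mem_univ, true_and]
          constructor
          · exact fun h => h.1
          · intro h
            exact ⟨h, fun ⟨b, hb, _⟩ => hx ⟨b, hb⟩⟩
        rw [e1, hr]
        have e2 : (univ.filter fun u' : Unit =>
            extMatrix N p L (Sum.inl x) (Sum.inr u') = true).card = 0 := by
          rw [Finset.card_eq_zero]
          ext u
          simp only [extMatrix, mem_filter, decide_eq_true_eq, Finset.notMem_empty,
            iff_false, not_and, mem_univ, true_implies]
          exact hx
        rw [e2]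
        omega
    · rw [card_filter_sum]
      have e1 : (univ.filter fun y => extMatrix N p L (Sum.inr u) (Sum.inl y) = true)
          = univ.image L := by
        ext y
        simp only [extMatrix, decide_eq_true_eq, mem_filter, mem_univ, true_and, mem_image]
        constructor
        · rintro ⟨a, rfl⟩; exact ⟨a, by simp⟩
        · rintro ⟨a, _, rfl⟩; exact ⟨a, rfl⟩
      rw [e1, Finset.card_image_of_injective _ hL]
      have e2 : (univ.filter fun u' : Unit =>
          extMatrix N p L (Sum.inr u) (Sum.inr u') = true).card = 1 := by
        rw [Finset.card_eq_one]
        exact ⟨(), by ext u; simp [extMatrix]⟩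
      rw [e2]
      simp only [card_univ, Fintype.card_fin]
      omega
  · -- column sums
    rintro (y | u)
    · rw [card_filter_sum]
      by_cases hy : ∃ a, y = L a
      · obtain ⟨a, rfl⟩ := hy
        have e1 : (univ.filter fun x => extMatrix N p L (Sum.inl x) (Sum.inl (L a)) = true)
            = (univ.filter fun x => N x (L a) = true).erase (p a) := by
          ext x
          simp only [extMatrix, Bool.and_eq_true, Bool.not_eq_true', decide_eq_false_iff_not,
            mem_filter, mem_erase, mem_univ, true_and]
          constructor
          · rintro ⟨hNy, hno⟩
            exact ⟨fun hx => hno ⟨a, hx, rfl⟩, hNy⟩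
          · rintro ⟨hx, hNy⟩
            refine ⟨hNy, ?_⟩
            rintro ⟨b, rfl, hb⟩
            have : a = b := hL hb
            exact hx (by rw [this])
        rw [e1, Finset.card_erase_of_mem (by simp [(h1 a a).2 rfl]), hc]
        have e2 : (univ.filter fun u' : Unit =>
            extMatrix N p L (Sum.inr u') (Sum.inl (L a)) = true).card = 1 := by
          rw [Finset.card_eq_one]
          exact ⟨(), by (ext u; simp [extMatrix]) <;> exact ⟨a, rfl⟩⟩
        rw [e2]
        omega
      · have e1 : (univ.filter fun x => extMatrix N p L (Sum.inl x) (Sum.inl y) = true)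
            = (univ.filter fun x => N x y = true) := by
          ext x
          simp only [extMatrix, Bool.and_eq_true, Bool.not_eq_true', decide_eq_false_iff_not,
            mem_filter, mem_univ, true_and]
          constructor
          · exact fun h => h.1
          · intro h
            exact ⟨h, fun ⟨b, _, hb⟩ => hy ⟨b, hb⟩⟩
        rw [e1, hc]
        have e2 : (univ.filter fun u' : Unit =>
            extMatrix N p L (Sum.inr u') (Sum.inl y) = true).card = 0 := by
          rw [Finset.card_eq_zero]
          ext u
          simp only [extMatrix, mem_filter, decide_eq_true_eq, Finset.notMem_empty,
            iff_false, not_and, mem_univ, true_implies]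
          exact hy
        rw [e2]
        omega
    · rw [card_filter_sum]
      have e1 : (univ.filter fun x => extMatrix N p L (Sum.inl x) (Sum.inr u) = true)
          = univ.image p := by
        ext x
        simp only [extMatrix, decide_eq_true_eq, mem_filter, mem_univ, true_and, mem_image]
        constructor
        · rintro ⟨a, rfl⟩; exact ⟨a, by simp⟩
        · rintro ⟨a, _, rfl⟩; exact ⟨a, rfl⟩
      rw [e1, Finset.card_image_of_injective _ hp]
      have e2 : (univ.filter fun u' : Unit =>
          extMatrix N p L (Sum.inr u') (Sum.inr u) = true).card = 1 := by
        rw [Finset.card_eq_one]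
        exact ⟨(), by ext u; simp [extMatrix]⟩
      rw [e2]
      simp only [card_univ, Fintype.card_fin]
      omega
  · -- J2-free
    rintro (x | ⟨⟩) (x' | ⟨⟩) (y | ⟨⟩) (y' | ⟨⟩) hxx hyy ⟨A, B, C, E⟩ <;>
      simp only [extMatrix, Bool.and_eq_true, Bool.not_eq_true', decide_eq_false_iff_not,
        decide_eq_true_eq] at A B C E <;>
      [skip; skip; skip; exact hyy rfl; skip; skip; skip; exact hyy rfl;
       skip; skip; skip; exact hyy rfl; exact hxx rfl; exact hxx rfl; exact hxx rfl;
       exact hxx rfl]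
    · -- rows some/some, cols some/some
      exact hj _ _ _ _ (fun h => hxx (by rw [h])) (fun h => hyy (by rw [h]))
        ⟨A.1, B.1, C.1, E.1⟩
    · -- rows some/some, cols some/inr
      obtain ⟨a, rfl⟩ := B
      obtain ⟨b, rfl⟩ := E
      exact h2 a b (fun h => hxx (by rw [h])) _ ⟨A.1, C.1⟩
    · -- rows some/some, cols inr/some
      obtain ⟨a, rfl⟩ := A
      obtain ⟨b, rfl⟩ := C
      exact h2 a b (fun h => hxx (by rw [h])) _ ⟨B.1, E.1⟩
    · -- rows some/inr, cols some/some
      obtain ⟨a, rfl⟩ := C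
      obtain ⟨b, rfl⟩ := E
      exact h3 a b (fun h => hyy (by rw [h])) _ ⟨A.1, B.1⟩
    · -- rows some/inr, cols some/inr
      obtain ⟨a, rfl⟩ := B
      obtain ⟨b, rfl⟩ := C
      exact A.2 ⟨a, rfl, by rw [(h1 a b).1 A.1]⟩
    · -- rows some/inr, cols inr/some
      obtain ⟨a, rfl⟩ := A
      obtain ⟨b, rfl⟩ := E
      exact B.2 ⟨a, rfl, by rw [(h1 a b).1 B.1]⟩
    · -- rows inr/some, cols some/some
      obtain ⟨a, rfl⟩ := A
      obtain ⟨b, rfl⟩ := B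
      exact h3 a b (fun h => hyy (by rw [h])) _ ⟨C.1, E.1⟩
    · -- rows inr/some, cols some/inr
      obtain ⟨a, rfl⟩ := A
      obtain ⟨b, rfl⟩ := E
      exact C.2 ⟨b, rfl, by rw [(h1 b a).1 C.1]⟩
    · -- rows inr/some, cols inr/some
      obtain ⟨a, rfl⟩ := B
      obtain ⟨b, rfl⟩ := C
      exact E.2 ⟨b, rfl, by rw [(h1 b a).1 E.1]⟩

lemma card_filter_equiv {ι κ : Type*} [Fintype ι] [Fintype κ] (e : ι ≃ κ)
    (P : ι → Prop) [DecidablePred P] :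
    (univ.filter (fun x : κ => P (e.symm x))).card = (univ.filter P).card := by
  apply Finset.card_bij' (fun x _ => e.symm x) (fun x _ => e x)
  · intro a ha; simp at ha ⊢; exact ha
  · intro a ha; simp at ha ⊢; simpa using ha
  · intro a _; simp
  · intro a _; simp

lemma IsIncidenceMatrix.reindex {ι κ : Type*} [Fintype ι] [DecidableEq ι]
    [Fintype κ] [DecidableEq κ] {k : ℕ} {M : Matrix ι ι Bool}
    (h : IsIncidenceMatrix k M) (e : ι ≃ κ) :
    IsIncidenceMatrix k (fun i j => M (e.symm i) (e.symm j)) := by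
  obtain ⟨hr, hc, hj⟩ := h
  refine ⟨fun i => ?_, fun j => ?_, fun i i' j j' hii hjj hx => ?_⟩
  · rw [card_filter_equiv e (fun j => M (e.symm i) j = true)]; exact hr _
  · rw [card_filter_equiv e (fun i => M i (e.symm j) = true)]; exact hc _
  · exact hj _ _ _ _ (fun hh => hii (by simpa using congrArg e hh))
      (fun hh => hjj (by simpa using congrArg e hh)) hx


section NEXT
variable {t d k θ₁ : ℕ} [NeZero t] [NeZero d]

def embt (hθt : θ₁ ≤ t) (r : Fin θ₁) : Fin t := ⟨r.val, lt_of_lt_of_le r.isLt hθt⟩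

lemma embt_inj (hθt : θ₁ ≤ t) : Function.Injective (embt hθt) := by
  intro a b h
  simp only [embt, Fin.mk.injEq] at h
  exact Fin.ext h

def NExt (t d k θ₁ : ℕ) (hθt : θ₁ ≤ t) [NeZero t] [NeZero d] (c : Fin t) (σ : Fin t → Fin d)
    (M : Matrix (Fin t × Fin d) (Fin t × Fin d) Bool) :
    Matrix ((Fin t × Fin d) ⊕ Fin θ₁) ((Fin t × Fin d) ⊕ Fin θ₁) Bool := fun x y =>
  match x, y with
  | .inl p, .inl q => M p q &&
      !(decide (p.1.val < θ₁ ∧ p.2.val < k-1 ∧ q.1 = p.1 + c ∧ q.2 = p.2 + σ p.1))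
  | .inl p, .inr r => decide (p.1.val = r.val ∧ p.2.val < k-1)
  | .inr r, .inl q => decide (q.1 = embt hθt r + c ∧ (q.2 - σ (embt hθt r)).val < k-1)
  | .inr r, .inr r' => decide (r = r')

variable {c : Fin t} {σ : Fin t → Fin d} {M : Matrix (Fin t × Fin d) (Fin t × Fin d) Bool}
  {hθt : θ₁ ≤ t}

@[simp] lemma NExt_inl_inl (p q : Fin t × Fin d) :
    NExt t d k θ₁ hθt c σ M (.inl p) (.inl q) = (M p q &&
      !(decide (p.1.val < θ₁ ∧ p.2.val < k-1 ∧ q.1 = p.1 + c ∧ q.2 = p.2 + σ p.1))) := rfl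
@[simp] lemma NExt_inl_inr (p : Fin t × Fin d) (r : Fin θ₁) :
    NExt t d k θ₁ hθt c σ M (.inl p) (.inr r) = decide (p.1.val = r.val ∧ p.2.val < k-1) := rfl
@[simp] lemma NExt_inr_inl (r : Fin θ₁) (q : Fin t × Fin d) :
    NExt t d k θ₁ hθt c σ M (.inr r) (.inl q) =
      decide (q.1 = embt hθt r + c ∧ (q.2 - σ (embt hθt r)).val < k-1) := rfl
@[simp] lemma NExt_inr_inr (r r' : Fin θ₁) :
    NExt t d k θ₁ hθt c σ M (.inr r) (.inr r') = decide (r = r') := rfl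

lemma NExt_incidence (hk : 2 ≤ k) (hd : k - 1 ≤ d)
    (hM : IsIncidenceMatrix k M)
    (hP : ∀ (l : Fin t) (i j : Fin d), (M (l, i) (l + c, j) = true ↔ j = i + σ l))
    (hrowU : ∀ (l m : Fin t) (i i' j : Fin d),
      M (l, i) (m, j) = true → M (l, i') (m, j) = true → i = i')
    (hcolU : ∀ (l m : Fin t) (i j j' : Fin d),
      M (l, i) (m, j) = true → M (l, i) (m, j') = true → j = j') :
    IsIncidenceMatrix k (NExt t d k θ₁ hθt c σ M) := by
  obtain ⟨hr, hc, hj⟩ := hM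
  refine ⟨?_, ?_, ?_⟩
  · -- row sums
    rintro (⟨l, i⟩ | r)
    · rw [card_filter_sum]
      by_cases hflag : l.val < θ₁ ∧ i.val < k - 1
      · have e1 : (univ.filter fun q : Fin t × Fin d =>
            NExt t d k θ₁ hθt c σ M (.inl (l, i)) (.inl q) = true)
            = (univ.filter fun q => M (l, i) q = true).erase (l + c, i + σ l) := by
          ext q
          simp only [NExt_inl_inl, Bool.and_eq_true, Bool.not_eq_true',
            decide_eq_false_iff_not, mem_filter, mem_erase, mem_univ, true_and, not_and]
          constructor
          · rintro ⟨hMq, hno⟩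
            refine ⟨fun hq => ?_, hMq⟩
            subst hq
            exact hno hflag.1 hflag.2 rfl rfl
          · rintro ⟨hq, hMq⟩
            refine ⟨hMq, fun _ _ h3 h4 => hq ?_⟩
            exact Prod.ext h3 h4
        have hmem : (l + c, i + σ l) ∈ (univ.filter fun q => M (l, i) q = true) := by
          simp only [mem_filter, mem_univ, true_and]
          exact (hP l i (i + σ l)).2 rfl
        rw [e1, Finset.card_erase_of_mem hmem, hr]
        have e2 : (univ.filter fun r : Fin θ₁ =>
            NExt t d k θ₁ hθt c σ M (.inl (l, i)) (.inr r) = true) = {⟨l.val, hflag.1⟩} := by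
          ext r
          simp only [NExt_inl_inr, decide_eq_true_eq, mem_filter, mem_univ, true_and,
            mem_singleton]
          constructor
          · rintro ⟨h1, _⟩; exact Fin.ext h1.symm
          · rintro rfl; exact ⟨rfl, hflag.2⟩
        rw [e2, Finset.card_singleton]
        omega
      · have e1 : (univ.filter fun q : Fin t × Fin d =>
            NExt t d k θ₁ hθt c σ M (.inl (l, i)) (.inl q) = true)
            = (univ.filter fun q => M (l, i) q = true) := by
          ext q
          simp only [NExt_inl_inl, Bool.and_eq_true, Bool.not_eq_true',
            decide_eq_false_iff_not, mem_filter, mem_univ, true_and]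
          exact ⟨fun h => h.1, fun h => ⟨h, fun hcond => hflag ⟨hcond.1, hcond.2.1⟩⟩⟩
        have e2 : (univ.filter fun r : Fin θ₁ =>
            NExt t d k θ₁ hθt c σ M (.inl (l, i)) (.inr r) = true) = ∅ := by
          ext r
          simp only [NExt_inl_inr, decide_eq_true_eq, mem_filter, mem_univ, true_and,
            Finset.notMem_empty, iff_false, not_and]
          intro h1 h2
          exact hflag ⟨h1 ▸ r.isLt, h2⟩
        rw [e1, hr, e2, Finset.card_empty]
        omega
    · rw [card_filter_sum]
      have e1 : (univ.filter fun q : Fin t × Fin d =>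
          NExt t d k θ₁ hθt c σ M (.inr r) (.inl q) = true)
          = univ.image (fun a : Fin (k-1) =>
              ((embt hθt r + c : Fin t), ((⟨a.val, lt_of_lt_of_le a.isLt hd⟩ : Fin d)
                + σ (embt hθt r) : Fin d))) := by
        ext q
        simp only [NExt_inr_inl, decide_eq_true_eq, mem_filter, mem_univ, true_and, mem_image]
        constructor
        · rintro ⟨h1, h2⟩
          refine ⟨⟨(q.2 - σ (embt hθt r)).val, h2⟩, ?_⟩
          have : (⟨(q.2 - σ (embt hθt r)).val, lt_of_lt_of_le h2 hd⟩ : Fin d)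
              = q.2 - σ (embt hθt r) := rfl
          rw [Prod.ext_iff]
          exact ⟨h1.symm, by rw [this, sub_add_cancel]⟩
        · rintro ⟨a, _, rfl⟩
          refine ⟨rfl, ?_⟩
          rw [add_sub_cancel_right]
          exact a.isLt
      have hinj : Function.Injective (fun a : Fin (k-1) =>
          ((embt hθt r + c : Fin t), ((⟨a.val, lt_of_lt_of_le a.isLt hd⟩ : Fin d)
            + σ (embt hθt r) : Fin d))) := by
        intro a b h
        simp only [Prod.mk.injEq] at h
        have h2 := add_right_cancel h.2
        simp only [Fin.mk.injEq] at h2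
        exact Fin.ext h2
      rw [e1, Finset.card_image_of_injective _ hinj]
      have e2 : (univ.filter fun r' : Fin θ₁ =>
          NExt t d k θ₁ hθt c σ M (.inr r) (.inr r') = true) = {r} := by
        ext r'
        simp only [NExt_inr_inr, decide_eq_true_eq, mem_filter, mem_univ, true_and,
          mem_singleton]
        exact eq_comm
      rw [e2, Finset.card_singleton, card_univ, Fintype.card_fin]
      omega
  · -- column sums
    rintro (⟨m, j⟩ | r)
    · rw [card_filter_sum]
      set l₀ : Fin t := m - c with hl₀
      set i₀ : Fin d := j - σ l₀ with hi₀
      have hm : m = l₀ + c := by rw [hl₀, sub_add_cancel]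
      have hjj : j = i₀ + σ l₀ := by rw [hi₀, sub_add_cancel]
      have hcond : ∀ p : Fin t × Fin d,
          (p.1.val < θ₁ ∧ p.2.val < k-1 ∧ m = p.1 + c ∧ j = p.2 + σ p.1) ↔
          (p = (l₀, i₀) ∧ l₀.val < θ₁ ∧ i₀.val < k-1) := by
        rintro ⟨a, b⟩
        constructor
        · rintro ⟨h1, h2, h3, h4⟩
          have ha : a = l₀ := by rw [hl₀, h3, add_sub_cancel_right]
          subst ha
          have hb : b = i₀ := by rw [hi₀, h4, add_sub_cancel_right]
          subst hb
          exact ⟨rfl, h1, h2⟩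
        · rintro ⟨hp, h1, h2⟩
          rw [Prod.mk.injEq] at hp
          obtain ⟨ha, hb⟩ := hp
          subst ha; subst hb
          exact ⟨h1, h2, hm, hjj⟩
      by_cases hQ : l₀.val < θ₁ ∧ i₀.val < k - 1
      · have e1 : (univ.filter fun p : Fin t × Fin d =>
            NExt t d k θ₁ hθt c σ M (.inl p) (.inl (m, j)) = true)
            = (univ.filter fun p => M p (m, j) = true).erase (l₀, i₀) := by
          ext p
          simp only [NExt_inl_inl, Bool.and_eq_true, Bool.not_eq_true',
            decide_eq_false_iff_not, mem_filter, mem_erase, mem_univ, true_and]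
          constructor
          · rintro ⟨hMp, hno⟩
            refine ⟨fun hp => hno ((hcond p).2 ⟨hp, hQ⟩), hMp⟩
          · rintro ⟨hp, hMp⟩
            exact ⟨hMp, fun hcd => hp ((hcond p).1 hcd).1⟩
        have hmem : ((l₀, i₀) : Fin t × Fin d) ∈ (univ.filter fun p => M p (m, j) = true) := by
          simp only [mem_filter, mem_univ, true_and]
          rw [hm]
          exact (hP l₀ i₀ j).2 hjj
        rw [e1, Finset.card_erase_of_mem hmem, hc]
        have e2 : (univ.filter fun r : Fin θ₁ =>
            NExt t d k θ₁ hθt c σ M (.inr r) (.inl (m, j)) = true) = {⟨l₀.val, hQ.1⟩} := by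
          ext r
          simp only [NExt_inr_inl, decide_eq_true_eq, mem_filter, mem_univ, true_and,
            mem_singleton]
          constructor
          · rintro ⟨h1, _⟩
            have h5 : embt hθt r = l₀ := by rw [hl₀, h1, add_sub_cancel_right]
            have h6 := congrArg Fin.val h5
            exact Fin.ext h6
          · rintro rfl
            have he : embt hθt (⟨l₀.val, hQ.1⟩ : Fin θ₁) = l₀ := Fin.ext rfl
            rw [he]
            exact ⟨hm, hi₀ ▸ hQ.2⟩
        rw [e2, Finset.card_singleton]
        omega
      · have e1 : (univ.filter fun p : Fin t × Fin d =>
            NExt t d k θ₁ hθt c σ M (.inl p) (.inl (m, j)) = true)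
            = (univ.filter fun p => M p (m, j) = true) := by
          ext p
          simp only [NExt_inl_inl, Bool.and_eq_true, Bool.not_eq_true',
            decide_eq_false_iff_not, mem_filter, mem_univ, true_and]
          exact ⟨fun h => h.1, fun h => ⟨h, fun hcd => hQ ((hcond p).1 hcd).2⟩⟩
        have e2 : (univ.filter fun r : Fin θ₁ =>
            NExt t d k θ₁ hθt c σ M (.inr r) (.inl (m, j)) = true) = ∅ := by
          ext r
          simp only [NExt_inr_inl, decide_eq_true_eq, mem_filter, mem_univ, true_and,
            Finset.notMem_empty, iff_false, not_and]
          intro h1 h2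
          have h5 : embt hθt r = l₀ := by rw [hl₀, h1, add_sub_cancel_right]
          have h6 := congrArg Fin.val h5
          refine hQ ⟨?_, ?_⟩
          · rw [← h6]; exact r.isLt
          · rw [hi₀, ← h5]; exact h2
        rw [e1, hc, e2, Finset.card_empty]
        omega
    · rw [card_filter_sum]
      have e1 : (univ.filter fun p : Fin t × Fin d =>
          NExt t d k θ₁ hθt c σ M (.inl p) (.inr r) = true)
          = univ.image (fun a : Fin (k-1) =>
              ((embt hθt r : Fin t), (⟨a.val, lt_of_lt_of_le a.isLt hd⟩ : Fin d))) := by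
        ext p
        simp only [NExt_inl_inr, decide_eq_true_eq, mem_filter, mem_univ, true_and, mem_image]
        constructor
        · rintro ⟨h1, h2⟩
          refine ⟨⟨p.2.val, h2⟩, ?_⟩
          rw [Prod.ext_iff]
          exact ⟨Fin.ext h1.symm, rfl⟩
        · rintro ⟨a, _, rfl⟩
          exact ⟨rfl, a.isLt⟩
      have hinj : Function.Injective (fun a : Fin (k-1) =>
          ((embt hθt r : Fin t), (⟨a.val, lt_of_lt_of_le a.isLt hd⟩ : Fin d))) := by
        intro a b h
        simp only [Prod.mk.injEq, Fin.mk.injEq] at h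
        exact Fin.ext h.2
      rw [e1, Finset.card_image_of_injective _ hinj]
      have e2 : (univ.filter fun r' : Fin θ₁ =>
          NExt t d k θ₁ hθt c σ M (.inr r') (.inr r) = true) = {r} := by
        ext r'
        simp only [NExt_inr_inr, decide_eq_true_eq, mem_filter, mem_univ, true_and,
          mem_singleton]
      rw [e2, Finset.card_singleton, card_univ, Fintype.card_fin]
      omega
  · -- J2-free
    rintro (⟨l, i⟩ | r) (⟨l', i'⟩ | r') (⟨m, j⟩ | s) (⟨m', j'⟩ | s') hxx hyy ⟨A, B, C, E⟩ <;>
      simp only [NExt_inl_inl, NExt_inl_inr, NExt_inr_inl, NExt_inr_inr, Bool.and_eq_true,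
        Bool.not_eq_true', decide_eq_false_iff_not, decide_eq_true_eq] at A B C E
    · -- all inl
      exact hj _ _ _ _ (fun h => hxx (by rw [h])) (fun h => hyy (by rw [h]))
        ⟨A.1, B.1, C.1, E.1⟩
    · -- rows inl/inl, cols inl, inr s'
      have hll : l = l' := Fin.ext (B.1.trans E.1.symm)
      subst hll
      have : i = i' := hrowU l m i i' j A.1 C.1
      exact hxx (by rw [this])
    · -- rows inl/inl, cols inr s, inl
      have hll : l = l' := Fin.ext (A.1.trans C.1.symm)
      subst hll
      have : i = i' := hrowU l m' i i' j' B.1 E.1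
      exact hxx (by rw [this])
    · -- rows inl/inl, cols inr/inr
      exact hyy (by rw [Fin.ext (A.1.symm.trans B.1)])
    · -- rows inl, inr r'; cols inl/inl
      have hmm : m = m' := C.1.trans E.1.symm
      subst hmm
      have : j = j' := hcolU l m i j j' A.1 B.1
      exact hyy (by rw [this])
    · -- rows inl, inr r'; cols inl (m,j), inr s'
      -- A : M (l,i) (m,j) ∧ ¬cond ; B : l.val = s'.val ∧ i.val < k-1
      -- C : m = embt r' + c ∧ ... ; E : r' = s'
      subst E
      have hl : l = embt hθt r' := Fin.ext B.1
      rw [C.1, hl] at A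
      have hji : j = i + σ (embt hθt r') := (hP _ i j).1 A.1
      exact A.2 ⟨B.1 ▸ r'.isLt, B.2, rfl, hl ▸ hji⟩
    · -- rows inl, inr r'; cols inr s, inl (m',j')
      subst C
      have hl : l = embt hθt r' := Fin.ext A.1
      rw [E.1, hl] at B
      have hji : j' = i + σ (embt hθt r') := (hP _ i j').1 B.1
      exact B.2 ⟨A.1 ▸ r'.isLt, A.2, rfl, hl ▸ hji⟩
    · -- rows inl, inr r'; cols inr/inr
      exact hyy (by rw [C.symm.trans E])
    · -- rows inr r, inl; cols inl/inl
      have hmm : m = m' := A.1.trans B.1.symm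
      subst hmm
      have : j = j' := hcolU l' m i' j j' C.1 E.1
      exact hyy (by rw [this])
    · -- rows inr r, inl; cols inl (m,j), inr s'
      subst B
      have hl : l' = embt hθt r := Fin.ext E.1
      rw [A.1, hl] at C
      have hji : j = i' + σ (embt hθt r) := (hP _ i' j).1 C.1
      exact C.2 ⟨E.1 ▸ r.isLt, E.2, rfl, hl ▸ hji⟩
    · -- rows inr r, inl; cols inr s, inl (m',j')
      subst A
      have hl : l' = embt hθt r := Fin.ext C.1
      rw [B.1, hl] at E
      have hji : j' = i' + σ (embt hθt r) := (hP _ i' j').1 E.1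
      exact E.2 ⟨C.1 ▸ r.isLt, C.2, rfl, hl ▸ hji⟩
    · -- rows inr r, inl; cols inr/inr
      exact hyy (by rw [A.symm.trans B])
    · -- rows inr/inr; cols inl/inl
      have h5 : embt hθt r = embt hθt r' := add_right_cancel (A.1.symm.trans C.1)
      exact hxx (by rw [embt_inj hθt h5])
    · -- rows inr/inr; cols inl, inr
      have h5 : embt hθt r = embt hθt r' := add_right_cancel (A.1.symm.trans C.1)
      exact hxx (by rw [embt_inj hθt h5])
    · -- rows inr/inr; cols inr, inl
      exact hxx (by rw [A.trans C.symm])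
    · -- rows inr/inr; cols inr/inr
      exact hxx (by rw [A.trans C.symm])
end NEXT

/-- If an incidence matrix of a symmetric configuration `v_k` with `v = t·d`,
`t ≥ k`, `d ≥ k-1`, is block double-circulant — every `d × d` block is circulant,
and blocks in positions `(l,m)`, `(l',m')` with `m - l ≡ m' - l' (mod t)` have equal
weights — and every block weight lies in `{0,1}`, then for every `0 ≤ θ ≤ t+1`
there exists an incidence matrix of a symmetric configuration `(v+θ)_k`. -/
theorem bdc_weight01_extension (t d k : ℕ) [NeZero d] (hk : 2 ≤ k) (ht : k ≤ t)
    (hd : k - 1 ≤ d)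
    (M : Matrix (Fin t × Fin d) (Fin t × Fin d) Bool)
    (hM : IsIncidenceMatrix k M)
    (hcirc : ∀ (l m : Fin t) (i j c : Fin d), M (l, i + c) (m, j + c) = M (l, i) (m, j))
    (hbdc : ∀ l m l' m' : Fin t, m - l = m' - l' →
      (Finset.univ.filter (fun j => M (l, 0) (m, j) = true)).card =
      (Finset.univ.filter (fun j => M (l', 0) (m', j) = true)).card)
    (hw : ∀ l m : Fin t,
      (Finset.univ.filter (fun j => M (l, 0) (m, j) = true)).card = 0 ∨
      (Finset.univ.filter (fun j => M (l, 0) (m, j) = true)).card = 1)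
    (θ : ℕ) (hθ : θ ≤ t + 1) :
    ∃ M' : Matrix (Fin (t * d + θ)) (Fin (t * d + θ)) Bool,
      IsIncidenceMatrix k M' := by
  
  haveI : NeZero t := ⟨by omega⟩
  classical
  have key : ∀ (l m : Fin t) (x y : Fin d), M (l, x) (m, y) = M (l, 0) (m, y - x) := by
    intro l m x y
    have h := hcirc l m 0 (y - x) x
    rw [zero_add, sub_add_cancel] at h
    exact h
  have hle1 : ∀ l m : Fin t,
      (Finset.univ.filter (fun j => M (l, 0) (m, j) = true)).card ≤ 1 := by
    intro l m; rcases hw l m with h | h <;> omega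
  have hrowU : ∀ (l m : Fin t) (i i' j : Fin d),
      M (l, i) (m, j) = true → M (l, i') (m, j) = true → i = i' := by
    intro l m i i' j h1 h2
    rw [key] at h1 h2
    have hmem1 : j - i ∈ Finset.univ.filter (fun j' => M (l, 0) (m, j') = true) := by
      simp [h1]
    have hmem2 : j - i' ∈ Finset.univ.filter (fun j' => M (l, 0) (m, j') = true) := by
      simp [h2]
    have heq := Finset.card_le_one.mp (hle1 l m) _ hmem1 _ hmem2
    exact sub_right_inj.mp heq
  have hcolU : ∀ (l m : Fin t) (i j j' : Fin d),
      M (l, i) (m, j) = true → M (l, i) (m, j') = true → j = j' := by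
    intro l m i j j' h1 h2
    rw [key] at h1 h2
    have hmem1 : j - i ∈ Finset.univ.filter (fun x => M (l, 0) (m, x) = true) := by simp [h1]
    have hmem2 : j' - i ∈ Finset.univ.filter (fun x => M (l, 0) (m, x) = true) := by simp [h2]
    have heq := Finset.card_le_one.mp (hle1 l m) _ hmem1 _ hmem2
    exact sub_left_inj.mp heq
  -- find a direction c with a weight-one block
  have hpos : 0 < (Finset.univ.filter
      (fun y => M ((0 : Fin t), (0 : Fin d)) y = true)).card := by
    rw [hM.1]; omega
  obtain ⟨y₀, hy₀⟩ := Finset.card_pos.mp hpos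
  obtain ⟨c, j₀⟩ := y₀
  rw [Finset.mem_filter] at hy₀
  have hcj : M ((0 : Fin t), (0 : Fin d)) (c, j₀) = true := hy₀.2
  have hone : ∀ l : Fin t,
      (Finset.univ.filter (fun j => M (l, 0) (l + c, j) = true)).card = 1 := by
    intro l
    have hb := hbdc l (l + c) 0 c (by rw [add_sub_cancel_left, sub_zero])
    rw [hb]
    rcases hw 0 c with h | h
    · exfalso
      have : (j₀ : Fin d) ∈ Finset.univ.filter (fun j => M (0, 0) (c, j) = true) := by
        simp only [Finset.mem_filter, Finset.mem_univ, true_and]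
        exact hcj
      rw [Finset.card_eq_zero.mp h] at this
      exact absurd this (Finset.notMem_empty _)
    · exact h
  choose σ hσ using fun l => Finset.card_eq_one.mp (hone l)
  have hP : ∀ (l : Fin t) (i j : Fin d), (M (l, i) (l + c, j) = true ↔ j = i + σ l) := by
    intro l i j
    rw [key]
    constructor
    · intro h
      have hm : j - i ∈ Finset.univ.filter (fun j' => M (l, 0) (l + c, j') = true) := by
        simp [h]
      rw [hσ l, Finset.mem_singleton] at hm
      rw [add_comm]
      exact (sub_eq_iff_eq_add.mp hm)
    · intro h
      subst h
      rw [add_sub_cancel_left]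
      have hm : σ l ∈ Finset.univ.filter (fun j' => M (l, 0) (l + c, j') = true) := by
        rw [hσ l]; exact Finset.mem_singleton_self _
      rw [Finset.mem_filter] at hm
      exact hm.2
  by_cases hcase : θ ≤ t
  · have hN : IsIncidenceMatrix k (NExt t d k θ hcase c σ M) :=
      NExt_incidence hk hd hM hP hrowU hcolU
    have hcard : Fintype.card ((Fin t × Fin d) ⊕ Fin θ) = t * d + θ := by simp
    let e := Fintype.equivFinOfCardEq hcard
    exact ⟨fun i j => NExt t d k θ hcase c σ M (e.symm i) (e.symm j), hN.reindex e⟩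
  · have hθeq : θ = t + 1 := by omega
    subst hθeq
    have hN : IsIncidenceMatrix k (NExt t d k t (le_refl t) c σ M) :=
      NExt_incidence hk hd hM hP hrowU hcolU
    set pl : Fin (k - 1) → (Fin t × Fin d) ⊕ Fin t :=
      fun a => Sum.inr ⟨a.val, by have := a.isLt; omega⟩ with hpl
    have hpinj : Function.Injective pl := by
      intro a b h
      simp only [hpl, Sum.inr.injEq, Fin.mk.injEq] at h
      exact Fin.ext h
    have h1 : ∀ a b, (NExt t d k t (le_refl t) c σ M (pl a) (pl b) = true ↔ a = b) := by
      intro a b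
      simp only [hpl, NExt_inr_inr, decide_eq_true_eq, Fin.mk.injEq]
      exact ⟨fun h => Fin.ext h, fun h => congrArg Fin.val h⟩
    have h2 : ∀ a b, a ≠ b → ∀ j, ¬(NExt t d k t (le_refl t) c σ M (pl a) j = true ∧
        NExt t d k t (le_refl t) c σ M (pl b) j = true) := by
      rintro a b hab (q | s) ⟨hA, hB⟩ <;>
        simp only [hpl, NExt_inr_inl, NExt_inr_inr, decide_eq_true_eq] at hA hB
      · have h5 : embt (le_refl t) ⟨a.val, _⟩ = embt (le_refl t) ⟨b.val, _⟩ :=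
          add_right_cancel (hA.1.symm.trans hB.1)
        have h6 := congrArg Fin.val h5
        exact hab (Fin.ext h6)
      · have := hA.trans hB.symm
        simp only [Fin.mk.injEq] at this
        exact hab (Fin.ext this)
    have h3 : ∀ a b, a ≠ b → ∀ i, ¬(NExt t d k t (le_refl t) c σ M i (pl a) = true ∧
        NExt t d k t (le_refl t) c σ M i (pl b) = true) := by
      rintro a b hab (q | s) ⟨hA, hB⟩ <;>
        simp only [hpl, NExt_inl_inr, NExt_inr_inr, decide_eq_true_eq] at hA hB
      · exact hab (Fin.ext (hA.1.symm.trans hB.1))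
      · have := hA.symm.trans hB
        simp only [Fin.mk.injEq] at this
        exact hab (Fin.ext this)
    have hN2 : IsIncidenceMatrix k (extMatrix (NExt t d k t (le_refl t) c σ M) pl pl) :=
      ext_lemma hN (by omega) pl pl hpinj hpinj h1 h2 h3
    have hcard : Fintype.card ((((Fin t × Fin d) ⊕ Fin t)) ⊕ Unit) = t * d + (t + 1) := by
      simp [add_assoc]
    let e := Fintype.equivFinOfCardEq hcard
    exact ⟨fun i j => extMatrix (NExt t d k t (le_refl t) c σ M) pl pl (e.symm i) (e.symm j),
      hN2.reindex e⟩
end EXT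
end
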